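/- arXiv:math-ph/0212030 — 2 statements merged into one kernel-verified Lean document; each statement's English description precedes it below -/
import Mathlib

section
/- (Canonical (Lounesto–Hestenes) decomposition of a Dirac–Hestenes spinor.) Let ψ be an element of the even subalgebra Cℓ⁰(1,3) and let σ, ω ∈ ℝ satisfy ψ * reverse(ψ) = σ·1 + ω·γ₅ with (σ, ω) ≠ (0, 0). Then there exist a real number ρ > 0, a real number β, and an element R of the even subalgebra Cℓ⁰(1,3) with R * reverse(R) = 1, such that ψ = √ρ · (cos(β/2)·1 + sin(β/2)·γ₅) * R. (Note that since γ₅² = −1, the factor cos(β/2) + sin(β/2)γ₅ equals exp((β/2)γ₅).) -/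
/-!
Since `γ₅² = -1`, the map `x + y i ↦ x + y γ₅` is an embedding of `ℂ` into the even,
reversion-invariant part of `Cℓ(1,3)`, and `ψ ψ̃` is the image of `z = σ + ω i`. Write
`z = u²` with `u = √|z| e^{i arg z / 2}`. Then `R = u⁻¹ ψ` satisfies
`R R̃ = u⁻¹ (ψ ψ̃) u⁻¹ = u⁻¹ z u⁻¹ = 1`, because `u⁻¹` is fixed by reversion and commutes
with `z`, and `ψ = u R` is the required decomposition with `ρ = |z|`, `β = arg z`.
-/

open CliffordAlgebra

noncomputable def Q13 : QuadraticForm ℝ (Fin 4 → ℝ) :=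
  QuadraticMap.weightedSumSquares ℝ ![(1 : ℝ), -1, -1, -1]

/-- The spacetime algebra `Cℓ(1,3)`. -/
noncomputable abbrev STA : Type := CliffordAlgebra Q13

/-- The generators `γμ`. -/
noncomputable def γ (μ : Fin 4) : STA := ι Q13 (Pi.single μ 1)

/-- The pseudoscalar `γ₅ = γ₀γ₁γ₂γ₃`. -/
noncomputable def γ₅ : STA := γ 0 * γ 1 * γ 2 * γ 3

namespace QuadraticMap

variable {R ι : Type*} [CommRing R] [Fintype ι] [DecidableEq ι]

theorem weightedSumSquares_single (w : ι → R) (i : ι) :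
    weightedSumSquares R w (Pi.single i 1) = w i := by
  simp [weightedSumSquares_apply, Pi.single_apply]

theorem isOrtho_weightedSumSquares_single (w : ι → R) {i j : ι} (hij : i ≠ j) :
    (weightedSumSquares R w).IsOrtho (Pi.single i 1) (Pi.single j 1) := by
  rw [isOrtho_def, weightedSumSquares_single, weightedSumSquares_single,
    weightedSumSquares_apply]
  simp [Pi.single_apply, mul_add, Finset.sum_add_distrib, hij, hij.symm]

end QuadraticMap

theorem γ_mul_self (μ : Fin 4) : γ μ * γ μ = algebraMap ℝ STA (![(1 : ℝ), -1, -1, -1] μ) := by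
  rw [γ, ι_sq_scalar]
  exact congrArg _ (QuadraticMap.weightedSumSquares_single _ μ)

theorem γ_mul_γ_of_lt {μ ν : Fin 4} (h : ν < μ) : γ μ * γ ν = -(γ ν * γ μ) :=
  ι_mul_ι_comm_of_isOrtho (QuadraticMap.isOrtho_weightedSumSquares_single _ h.ne')

theorem γ_mul_γ_mul_of_lt {μ ν : Fin 4} (h : ν < μ) (x : STA) :
    γ μ * (γ ν * x) = -(γ ν * (γ μ * x)) :=
  ι_mul_ι_mul_of_isOrtho x (QuadraticMap.isOrtho_weightedSumSquares_single _ h.ne')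

theorem reverse_γ (μ : Fin 4) : reverse (γ μ) = γ μ := reverse_ι _

theorem γ₅_mul_self : γ₅ * γ₅ = -1 := by
  simp (disch := decide) [γ₅, mul_assoc, γ_mul_γ_mul_of_lt, γ_mul_self]

theorem reverse_γ₅ : reverse γ₅ = γ₅ := by
  simp (disch := decide) [γ₅, reverse.map_mul, reverse_γ, mul_assoc, γ_mul_γ_mul_of_lt,
    γ_mul_γ_of_lt]

theorem γ₅_mem_even : γ₅ ∈ even Q13 := by
  rw [γ₅, mul_assoc]
  exact mul_mem (ι_mul_ι_mem_evenOdd_zero _ _ _) (ι_mul_ι_mem_evenOdd_zero _ _ _)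

theorem exists_rotor_of_mul_reverse_eq {M : Type*} [AddCommGroup M] [Module ℝ M]
    {Q : QuadraticForm ℝ M} (φ : ℂ →ₐ[ℝ] CliffordAlgebra Q)
    (hφ_even : ∀ z, φ z ∈ even Q) (hφ_reverse : ∀ z, reverse (φ z) = φ z)
    {ψ : CliffordAlgebra Q} (hψ : ψ ∈ even Q) {u : ℂ} (hu : u ≠ 0)
    (h : ψ * reverse ψ = φ (u * u)) :
    ∃ R ∈ even Q, R * reverse R = 1 ∧ ψ = φ u * R := by
  refine ⟨φ u⁻¹ * ψ, mul_mem (hφ_even _) hψ, ?_, ?_⟩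
  · calc φ u⁻¹ * ψ * reverse (φ u⁻¹ * ψ) = φ u⁻¹ * (ψ * reverse ψ) * φ u⁻¹ := by
          rw [reverse.map_mul, hφ_reverse, mul_assoc, mul_assoc, mul_assoc]
      _ = 1 := by rw [h, ← map_mul, ← map_mul, ← map_one φ]; congr 1; field_simp
  · rw [← mul_assoc, ← map_mul, mul_inv_cancel₀ hu, map_one, one_mul]

theorem Complex.sqrt_norm_mul_exp_half_arg_mul_self (z : ℂ) :
    (Real.sqrt ‖z‖ * exp ((arg z / 2 : ℝ) * I)) * (Real.sqrt ‖z‖ * exp ((arg z / 2 : ℝ) * I)) =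
      z :=
  calc _ = (Real.sqrt ‖z‖ * Real.sqrt ‖z‖ : ℝ) *
        (exp ((arg z / 2 : ℝ) * I) * exp ((arg z / 2 : ℝ) * I)) := by push_cast; ring
    _ = ‖z‖ * exp (arg z * I) := by
        rw [Real.mul_self_sqrt (norm_nonneg z), ← exp_add]; push_cast; ring_nf
    _ = z := norm_mul_exp_arg_mul_I z

noncomputable def ofComplex : ℂ →ₐ[ℝ] STA := Complex.liftAux γ₅ γ₅_mul_self

theorem ofComplex_apply (z : ℂ) : ofComplex z = z.re • 1 + z.im • γ₅ := by
  rw [ofComplex, Complex.liftAux_apply, Algebra.algebraMap_eq_smul_one]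

theorem ofComplex_ofReal_mul_exp_mul_I (r θ : ℝ) :
    ofComplex (r * Complex.exp (θ * Complex.I)) =
      r • (Real.cos θ • (1 : STA) + Real.sin θ • γ₅) := by
  rw [ofComplex_apply, Complex.re_ofReal_mul, Complex.im_ofReal_mul,
    Complex.exp_ofReal_mul_I_re, Complex.exp_ofReal_mul_I_im, smul_add, smul_smul, smul_smul]

theorem ofComplex_mem_even (z : ℂ) : ofComplex z ∈ even Q13 := by
  rw [ofComplex_apply]
  exact add_mem (Subalgebra.smul_mem _ (one_mem _) _) (Subalgebra.smul_mem _ γ₅_mem_even _)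

theorem reverse_ofComplex (z : ℂ) : reverse (ofComplex z) = ofComplex z := by
  rw [ofComplex_apply, map_add, map_smul, map_smul, reverse.map_one, reverse_γ₅]

/-- Canonical (Lounesto–Hestenes) decomposition of a Dirac–Hestenes spinor. -/
theorem canonical_decomposition (ψ : STA) (hψ : ψ ∈ CliffordAlgebra.even Q13)
    (σ ω : ℝ) (h : ψ * reverse (Q := Q13) ψ = σ • (1 : STA) + ω • γ₅)
    (hne : (σ, ω) ≠ (0, 0)) :
    ∃ ρ : ℝ, 0 < ρ ∧ ∃ β : ℝ, ∃ R ∈ CliffordAlgebra.even Q13,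
      R * reverse (Q := Q13) R = 1 ∧
      ψ = Real.sqrt ρ •
        ((Real.cos (β / 2) • (1 : STA) + Real.sin (β / 2) • γ₅) * R) := by
  set z : ℂ := ⟨σ, ω⟩
  have hz : z ≠ 0 := fun hz => hne (by simpa [z, Complex.ext_iff] using hz)
  set u : ℂ := Real.sqrt ‖z‖ * Complex.exp ((z.arg / 2 : ℝ) * Complex.I)
  have huu : u * u = z := Complex.sqrt_norm_mul_exp_half_arg_mul_self z
  have h' : ψ * reverse ψ = ofComplex (u * u) := by rw [h, huu, ofComplex_apply]
  obtain ⟨R, hR, hRR, hψR⟩ := exists_rotor_of_mul_reverse_eq ofComplex ofComplex_mem_even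
    reverse_ofComplex hψ (left_ne_zero_of_mul (huu ▸ hz)) h'
  refine ⟨‖z‖, norm_pos_iff.mpr hz, z.arg, R, hR, hRR, ?_⟩
  rw [hψR, ofComplex_ofReal_mul_exp_mul_I, smul_mul_assoc]
end

section
/- (The even subalgebra of the spacetime algebra is the Pauli algebra.) The even subalgebra Cℓ⁰(1,3) of the real Clifford algebra Cℓ(1,3) of Minkowski signature (1,3) is isomorphic as an ℝ-algebra to the real Clifford algebra Cℓ(3,0) of the positive-definite quadratic form on ℝ³ (the Pauli algebra); equivalently, Cℓ⁰(1,3) ≃ₐ[ℝ] Matrix (Fin 2) (Fin 2) ℂ. -/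
noncomputable def Q30 : QuadraticForm ℝ (Fin 3 → ℝ) :=
  QuadraticMap.weightedSumSquares ℝ ![(1 : ℝ), 1, 1]

/-!
Since `Cℓ⁰(Q) ≅ Cℓ⁰(-Q)` for any quadratic form, we may replace `Q13` by
`-Q13 = x₁² + x₂² + x₃² - x₀²`, which is `Q30` with one extra negative square. For any `Q`, the
even subalgebra of `Q ⊕ ⟨-1⟩` is isomorphic to `Cℓ(Q)` (`CliffordAlgebra.equivEven`).

The Pauli matrices anticommute and square to `1`, so they define an algebra map
`Cℓ(3,0) → M₂(ℂ)`; it is onto because the Pauli matrices and their products span `M₂(ℂ)` over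
`ℝ`, and hence bijective since both sides have real dimension `8 = 2³`.
-/

open Module

namespace CliffordAlgebra

section EvenMap

variable {R M₁ M₂ M₃ A : Type*} [CommRing R] [Ring A] [Algebra R A]
  [AddCommGroup M₁] [AddCommGroup M₂] [AddCommGroup M₃]
  [Module R M₁] [Module R M₂] [Module R M₃]
  {Q₁ : QuadraticForm R M₁} {Q₂ : QuadraticForm R M₂} {Q₃ : QuadraticForm R M₃}

def EvenHom.compIsometry (g : EvenHom Q₂ A) (f : Q₁ →qᵢ Q₂) : EvenHom Q₁ A where
  bilin := g.bilin.compl₁₂ f.toLinearMap f.toLinearMap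
  contract m := (g.contract (f m)).trans <| by rw [f.map_app]
  contract_mid m₁ m₂ m₃ := (g.contract_mid (f m₁) (f m₂) (f m₃)).trans <| by rw [f.map_app]; rfl

def evenMap (f : Q₁ →qᵢ Q₂) : even Q₁ →ₐ[R] even Q₂ :=
  even.lift Q₁ ((even.ι Q₂).compIsometry f)

@[simp]
theorem evenMap_ι (f : Q₁ →qᵢ Q₂) (m₁ m₂ : M₁) :
    evenMap f ((even.ι Q₁).bilin m₁ m₂) = (even.ι Q₂).bilin (f m₁) (f m₂) :=
  even.lift_ι Q₁ _ m₁ m₂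

variable (Q₁) in
theorem evenMap_id : evenMap (QuadraticMap.Isometry.id Q₁) = AlgHom.id R (even Q₁) :=
  even.algHom_ext Q₁ <| EvenHom.ext <| LinearMap.ext₂ fun m₁ m₂ => evenMap_ι _ m₁ m₂

theorem evenMap_comp_evenMap (g : Q₂ →qᵢ Q₃) (f : Q₁ →qᵢ Q₂) :
    (evenMap g).comp (evenMap f) = evenMap (g.comp f) :=
  even.algHom_ext Q₁ <| EvenHom.ext <| LinearMap.ext₂ fun m₁ m₂ => by simp

def evenEquivOfIsometry (e : Q₁.IsometryEquiv Q₂) : even Q₁ ≃ₐ[R] even Q₂ :=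
  AlgEquiv.ofAlgHom (evenMap e.toIsometry) (evenMap e.symm.toIsometry)
    ((evenMap_comp_evenMap _ _).trans <| by
      convert evenMap_id Q₂ using 2
      ext m
      exact e.toLinearEquiv.apply_symm_apply m)
    ((evenMap_comp_evenMap _ _).trans <| by
      convert evenMap_id Q₁ using 2
      ext m
      exact e.toLinearEquiv.symm_apply_apply m)

end EvenMap

section Finrank

variable {R M : Type*} [CommRing R] [Invertible (2 : R)] [AddCommGroup M] [Module R M]
  (Q : QuadraticForm R M)

noncomputable def finsetBasis {I : Type*} [LinearOrder I] (b : Basis I R M) :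
    Basis (Finset I) R (CliffordAlgebra Q) :=
  b.ExteriorAlgebra.map (equivExterior Q).symm

variable [StrongRankCondition R] [Module.Free R M] [Module.Finite R M]

instance : Module.Finite R (CliffordAlgebra Q) :=
  .of_basis (finsetBasis Q (finBasis R M))

theorem finrank_eq_two_pow : finrank R (CliffordAlgebra Q) = 2 ^ finrank R M := by
  rw [finrank_eq_card_basis (finsetBasis Q (finBasis R M)), Fintype.card_finset,
    Fintype.card_fin]

end Finrank

end CliffordAlgebra

open CliffordAlgebra Complex

theorem Q13_apply (x : Fin 4 → ℝ) : Q13 x = x 0 * x 0 - x 1 * x 1 - x 2 * x 2 - x 3 * x 3 := by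
  simp only [Q13, QuadraticMap.weightedSumSquares_apply, Fin.sum_univ_four, smul_eq_mul,
    Matrix.cons_val]
  ring

theorem Q30_apply (x : Fin 3 → ℝ) : Q30 x = x 0 * x 0 + x 1 * x 1 + x 2 * x 2 := by
  simp [Q30, QuadraticMap.weightedSumSquares_apply, Fin.sum_univ_three]

noncomputable def isometryEquivNegQ13 : (EquivEven.Q' Q30).IsometryEquiv (-Q13) where
  toLinearEquiv := (LinearEquiv.prodComm ℝ _ ℝ).trans (Fin.consLinearEquiv ℝ fun _ => ℝ)
  map_app' := fun ⟨x, t⟩ => by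
    change -Q13 (Fin.cons t x) = Q30 x - t * t
    rw [Q13_apply, Q30_apply]
    change -(t * t - x 0 * x 0 - x 1 * x 1 - x 2 * x 2) = _
    ring

noncomputable def evenQ13EquivQ30 : even Q13 ≃ₐ[ℝ] CliffordAlgebra Q30 :=
  (evenEquivEvenNeg Q13).trans <|
    (evenEquivOfIsometry isometryEquivNegQ13.symm).trans (equivEven Q30).symm

def pauli : Fin 3 → Matrix (Fin 2) (Fin 2) ℂ :=
  ![!![0, 1; 1, 0], !![0, -I; I, 0], !![1, 0; 0, -1]]

theorem linearCombination_pauli (x : Fin 3 → ℝ) :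
    Fintype.linearCombination ℝ pauli x = !![(x 2 : ℂ), x 0 - x 1 * I; x 0 + x 1 * I, -x 2] := by
  ext i j
  fin_cases i <;> fin_cases j <;>
    simp [pauli, Fintype.linearCombination_apply, Fin.sum_univ_three, Complex.ext_iff]

theorem linearCombination_pauli_mul_self (x : Fin 3 → ℝ) :
    Fintype.linearCombination ℝ pauli x * Fintype.linearCombination ℝ pauli x =
      algebraMap ℝ _ (Q30 x) := by
  rw [linearCombination_pauli, Matrix.mul_fin_two, Q30_apply, Matrix.algebraMap_eq_diagonal]
  ext i j
  fin_cases i <;> fin_cases j <;> simp [Complex.ext_iff] <;> (try constructor) <;> ring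

noncomputable def toPauli : CliffordAlgebra Q30 →ₐ[ℝ] Matrix (Fin 2) (Fin 2) ℂ :=
  lift Q30 ⟨Fintype.linearCombination ℝ pauli, linearCombination_pauli_mul_self⟩

theorem toPauli_ι_single (i : Fin 3) : toPauli (ι Q30 (Pi.single i 1)) = pauli i := by
  rw [toPauli, lift_ι_apply]
  exact (Fintype.linearCombination_apply_single ℝ pauli i 1).trans (one_smul ℝ _)

theorem matrix_eq_pauli_expansion (m : Matrix (Fin 2) (Fin 2) ℂ) :
    m = (((m 0 0).re + (m 1 1).re) / 2) • (1 : Matrix (Fin 2) (Fin 2) ℂ)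
      + (((m 0 1).re + (m 1 0).re) / 2) • pauli 0
      + (((m 1 0).im - (m 0 1).im) / 2) • pauli 1
      + (((m 0 0).re - (m 1 1).re) / 2) • pauli 2
      + (((m 0 0).im - (m 1 1).im) / 2) • (pauli 0 * pauli 1)
      + (((m 1 0).re - (m 0 1).re) / 2) • (pauli 0 * pauli 2)
      + (((m 0 1).im + (m 1 0).im) / 2) • (pauli 1 * pauli 2)
      + (((m 0 0).im + (m 1 1).im) / 2) • (pauli 0 * pauli 1 * pauli 2) := by
  ext i j
  fin_cases i <;> fin_cases j <;>
    simp [pauli, Complex.ext_iff] <;> constructor <;> ring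

theorem adjoin_pauli_eq_top : Algebra.adjoin ℝ (Set.range pauli) = ⊤ := by
  refine Algebra.eq_top_iff.2 fun m => ?_
  have h i : pauli i ∈ Algebra.adjoin ℝ (Set.range pauli) := Algebra.subset_adjoin ⟨i, rfl⟩
  rw [matrix_eq_pauli_expansion m]
  refine add_mem (add_mem (add_mem (add_mem (add_mem (add_mem (add_mem ?_ ?_) ?_) ?_) ?_) ?_) ?_)
    ?_ <;> refine Subalgebra.smul_mem _ ?_ _ <;>
    first
    | exact one_mem _
    | exact h _
    | exact mul_mem (h _) (h _)
    | exact mul_mem (mul_mem (h _) (h _)) (h _)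

theorem toPauli_surjective : Function.Surjective toPauli := by
  rw [← AlgHom.range_eq_top, eq_top_iff, ← adjoin_pauli_eq_top]
  exact Algebra.adjoin_le (Set.range_subset_iff.2 fun i => ⟨_, toPauli_ι_single i⟩)

theorem toPauli_injective : Function.Injective toPauli := by
  have hdim : finrank ℝ (CliffordAlgebra Q30) = finrank ℝ (Matrix (Fin 2) (Fin 2) ℂ) := by
    simp [finrank_eq_two_pow, finrank_matrix]
  exact (LinearMap.injective_iff_surjective_of_finrank_eq_finrank hdim
    (f := toPauli.toLinearMap)).2 toPauli_surjective

noncomputable def pauliEquiv : CliffordAlgebra Q30 ≃ₐ[ℝ] Matrix (Fin 2) (Fin 2) ℂ :=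
  AlgEquiv.ofBijective toPauli ⟨toPauli_injective, toPauli_surjective⟩

/-- The even subalgebra of the spacetime algebra is the Pauli algebra,
i.e. `Cℓ(3,0) ≅ Matrix (Fin 2) (Fin 2) ℂ`. -/
theorem even_spacetime_algebra_iso_pauli :
    Nonempty (CliffordAlgebra.even Q13 ≃ₐ[ℝ] CliffordAlgebra Q30) ∧
    Nonempty (CliffordAlgebra.even Q13 ≃ₐ[ℝ] Matrix (Fin 2) (Fin 2) ℂ) :=
  ⟨⟨evenQ13EquivQ30⟩, ⟨evenQ13EquivQ30.trans pauliEquiv⟩⟩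
end
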